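/- arXiv:math/0306412 — 5 statements merged into one kernel-verified Lean document; each statement's English description precedes it below -/
import Mathlib

section
/- Let λ, μ be partitions contained in the m×n rectangle with μ ⊂ λ and |μ| = |λ| - 1, say μ_i = λ_i - 1 for a unique index i and μ_j = λ_j for j ≠ i. Then h_λ · h_{μ'} / (h_{λ'} · h_μ) = (m - i + λ_i)(n + i - λ_i), where ν' denotes the complement of ν in the m×n rectangle and h_ν is the product of hook lengths of ν. -/
/-- The complement of a partition in the `m × n` rectangle: `λ'_i = n - λ_{m+1-i}`. -/
def rectComplement (m n : ℕ) (lam : Fin m → ℕ) : Fin m → ℕ :=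
  fun i => n - lam i.rev

/-- The conjugate partition evaluated at (0-indexed) column `j`. -/
def conjPart (m : ℕ) (lam : Fin m → ℕ) (j : ℕ) : ℕ :=
  (Finset.univ.filter (fun i : Fin m => j < lam i)).card

/-- The product of the hook lengths of a partition with at most `m` parts. -/
def hookProd (m : ℕ) (lam : Fin m → ℕ) : ℕ :=
  ∏ i : Fin m, ∏ j ∈ Finset.range (lam i), (lam i + conjPart m lam j - (i + j + 1))

/-! Frobenius' form of the hook length formula: with the beta-numbers `β_i = λ_i + m - 1 - i`
(0-indexed rows), `h_λ · ∏_{i<k} (β_i - β_k) = ∏_i β_i!`, because the hooks of row `i` and the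
differences `β_i - β_k` for `k > i` are together exactly `1, …, β_i`. Complementing in the
rectangle replaces `β` by `m + n - 1 - β` read backwards, which leaves the difference product
unchanged. Removing a box from row `i` lowers only `β_i`, by one, so in the ratio the difference
products cancel and the factorials leave `β_i (m + n - β_i) = (m - i + λ_i)(n + i - λ_i)`. -/

open Finset Nat

section

variable {m n : ℕ}

lemma succ_le_conjPart_of_lt {lam : Fin m → ℕ} (hanti : Antitone lam) {j : ℕ} {a : Fin m}
    (h : j < lam a) : (a : ℕ) + 1 ≤ conjPart m lam j := by
  rw [← Fin.card_Iic]
  exact card_le_card fun b hb => mem_filter.2 ⟨mem_univ b, h.trans_le (hanti (mem_Iic.1 hb))⟩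

lemma conjPart_le_of_le {lam : Fin m → ℕ} (hanti : Antitone lam) {j : ℕ} {a : Fin m}
    (h : lam a ≤ j) : conjPart m lam j ≤ a := by
  rw [← Fin.card_Iio]
  refine card_le_card fun b hb => mem_Iio.2 (lt_of_not_ge fun hab => ?_)
  exact (h.trans_lt (mem_filter.1 hb).2).not_ge (hanti hab)

lemma conjPart_antitone (lam : Fin m → ℕ) : Antitone (conjPart m lam) :=
  fun _ _ h => card_le_card fun _ hb => by
    simp only [mem_filter, mem_univ, true_and] at hb ⊢
    exact h.trans_lt hb

lemma conjPart_le (lam : Fin m → ℕ) (j : ℕ) : conjPart m lam j ≤ m :=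
  (card_filter_le _ _).trans_eq (card_fin m)

lemma rectComplement_antitone {lam : Fin m → ℕ} (hanti : Antitone lam) :
    Antitone (rectComplement m n lam) :=
  fun _ _ h => Nat.sub_le_sub_left (hanti (Fin.rev_le_rev.2 h)) n

def betaNumber (m : ℕ) (lam : Fin m → ℕ) (i : Fin m) : ℕ := lam i + (m - 1 - i)

lemma betaNumber_strictAnti {lam : Fin m → ℕ} (hanti : Antitone lam) :
    StrictAnti (betaNumber m lam) := by
  intro i k h
  have := hanti h.le
  have : (k : ℕ) < m := k.isLt
  have : (i : ℕ) < k := h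
  unfold betaNumber
  omega

lemma betaNumber_le {lam : Fin m → ℕ} (hle : ∀ j, lam j ≤ n) (j : Fin m) :
    betaNumber m lam j ≤ m + n - 1 := by
  have := hle j
  have : (j : ℕ) < m := j.isLt
  unfold betaNumber
  omega

lemma betaNumber_rectComplement {lam : Fin m → ℕ} (hle : ∀ j, lam j ≤ n) (j : Fin m) :
    betaNumber m (rectComplement m n lam) j = (m + n - 1) - betaNumber m lam j.rev := by
  have := hle j.rev
  have : (j : ℕ) < m := j.isLt
  simp only [betaNumber, rectComplement, Fin.val_rev]
  omega

end

/-- For strictly decreasing `b` this is the Vandermonde determinant of `b`; otherwise truncated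
subtraction makes it `0`. -/
def diffProd {m : ℕ} (b : Fin m → ℕ) : ℕ :=
  ∏ i : Fin m, ∏ k ∈ Ioi i, (b i - b k)

lemma diffProd_pos {m : ℕ} {b : Fin m → ℕ} (hb : StrictAnti b) : 0 < diffProd b :=
  prod_pos fun _ _ => prod_pos fun _ hk => Nat.sub_pos_of_lt (hb (mem_Ioi.1 hk))

lemma diffProd_sub_rev {m N : ℕ} {b : Fin m → ℕ} (hb : ∀ j, b j ≤ N) :
    diffProd (fun j => N - b j.rev) = diffProd b := by
  rw [diffProd, diffProd, prod_sigma', prod_sigma']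
  refine prod_nbij' (fun p => ⟨p.2.rev, p.1.rev⟩) (fun p => ⟨p.2.rev, p.1.rev⟩)
    ?_ ?_ (by simp) (by simp) ?_ <;>
    simp only [mem_sigma, mem_univ, mem_Ioi, true_and, Fin.rev_lt_rev, imp_self, implies_true]
  rintro ⟨j, k⟩ -
  dsimp only
  have := hb j.rev
  have := hb k.rev
  omega

lemma prod_mul_prod_eq_factorial_of_partition {α β : Type*} {s : Finset α} {t : Finset β}
    {f : α → ℕ} {g : β → ℕ} {B : ℕ} (hf : Set.InjOn f s) (hg : Set.InjOn g t)
    (hfB : ∀ a ∈ s, f a ∈ Icc 1 B) (hgB : ∀ b ∈ t, g b ∈ Icc 1 B)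
    (hfg : ∀ a ∈ s, ∀ b ∈ t, f a ≠ g b) (hcard : #s + #t = B) :
    (∏ a ∈ s, f a) * ∏ b ∈ t, g b = B ! := by
  have hdisj : Disjoint (s.image f) (t.image g) := by
    simp only [disjoint_left, mem_image]
    rintro _ ⟨a, ha, rfl⟩ ⟨b, hb, hab⟩
    exact hfg a ha b hb hab.symm
  have hunion : s.image f ∪ t.image g = Icc 1 B := by
    refine eq_of_subset_of_card_le (union_subset ?_ ?_) ?_
    · simpa [subset_iff] using hfB
    · simpa [subset_iff] using hgB
    · rw [card_union_of_disjoint hdisj, Finset.card_image_of_injOn hf,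
        Finset.card_image_of_injOn hg,
        Nat.card_Icc, hcard, Nat.add_sub_cancel]
  rw [← prod_Ico_id_eq_factorial, Ico_add_one_right_eq_Icc, ← hunion, prod_union hdisj,
    prod_image hf, prod_image hg]

section

variable {m : ℕ} {lam : Fin m → ℕ}

/-- According as column `j` reaches row `k` or not, the hook at `(i, j)` is longer or shorter
than `β_i - β_k`. -/
lemma hook_ne_betaNumber_sub (hanti : Antitone lam) {i k : Fin m} (hik : i < k) (j : ℕ) :
    lam i + conjPart m lam j - (i + j + 1) ≠ betaNumber m lam i - betaNumber m lam k := by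
  have := hanti hik.le
  have := betaNumber_strictAnti hanti hik
  have : (k : ℕ) < m := k.isLt
  have : (i : ℕ) < k := hik
  unfold betaNumber at *
  rcases lt_or_ge j (lam k) with hjk | hjk
  · have := succ_le_conjPart_of_lt hanti hjk
    omega
  · have := conjPart_le_of_le hanti hjk
    omega

lemma prod_hook_row_mul_prod_betaNumber_sub (hanti : Antitone lam) (i : Fin m) :
    (∏ j ∈ range (lam i), (lam i + conjPart m lam j - (i + j + 1))) *
      ∏ k ∈ Ioi i, (betaNumber m lam i - betaNumber m lam k) = (betaNumber m lam i)! := by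
  have hβ := betaNumber_strictAnti hanti
  have hrow : ∀ j ∈ range (lam i), (i : ℕ) + 1 ≤ conjPart m lam j :=
    fun j hj => succ_le_conjPart_of_lt hanti (mem_range.1 hj)
  have hi : (i : ℕ) < m := i.isLt
  refine prod_mul_prod_eq_factorial_of_partition ?_ ?_ ?_ ?_ ?_ ?_
  · refine StrictAntiOn.injOn fun j _ j' hj' hjj' => ?_
    have := hrow j' hj'
    have := conjPart_antitone lam hjj'.le
    have := mem_range.1 hj'
    omega
  · refine StrictMonoOn.injOn fun k hk k' hk' hkk' => ?_
    have := hβ (mem_Ioi.1 hk)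
    have := hβ hkk'
    omega
  · intro j hj
    have := hrow j hj
    have := conjPart_le lam j
    have := mem_range.1 hj
    simp only [mem_Icc, betaNumber]
    omega
  · intro k hk
    have := hβ (mem_Ioi.1 hk)
    simp only [mem_Icc]
    omega
  · exact fun j _ k hk => hook_ne_betaNumber_sub hanti (mem_Ioi.1 hk) j
  · rw [card_range, Fin.card_Ioi, betaNumber]

lemma hookProd_mul_diffProd (hanti : Antitone lam) :
    hookProd m lam * diffProd (betaNumber m lam) = ∏ i, (betaNumber m lam i)! := by
  rw [hookProd, diffProd, ← prod_mul_distrib]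
  exact prod_congr rfl fun i _ => prod_hook_row_mul_prod_betaNumber_sub hanti i

lemma hookProd_rectComplement_mul_diffProd {n : ℕ} (hanti : Antitone lam)
    (hle : ∀ j, lam j ≤ n) :
    hookProd m (rectComplement m n lam) * diffProd (betaNumber m lam) =
      ∏ i, (m + n - 1 - betaNumber m lam i)! := by
  have h := hookProd_mul_diffProd (rectComplement_antitone (n := n) hanti)
  rw [funext (betaNumber_rectComplement hle), diffProd_sub_rev (betaNumber_le hle)] at h
  exact h.trans (Fintype.prod_equiv Fin.revPerm _ _ fun _ => rfl)

end

lemma Fintype.prod_eq_mul_prod_of_eq_off {ι M : Type*} [Fintype ι] [DecidableEq ι]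
    [CommMonoid M] {f g : ι → M} {i : ι} {c : M} (hi : f i = c * g i)
    (hoff : ∀ j, j ≠ i → f j = g j) : ∏ j, f j = c * ∏ j, g j := by
  rw [Fintype.prod_eq_mul_prod_compl i, Fintype.prod_eq_mul_prod_compl i g, hi, mul_assoc]
  congr 2
  exact Finset.prod_congr rfl fun j hj => hoff j (by simpa using hj)

/-- Rows are 0-indexed: the paper's `i` is `i + 1` here. -/
theorem hookProd_ratio_remove_box (m n : ℕ) (lam mu : Fin m → ℕ) (i : Fin m)
    (hlanti : Antitone lam) (hlle : ∀ j, lam j ≤ n)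
    (hmanti : Antitone mu) (hmle : ∀ j, mu j ≤ n)
    (hi : mu i + 1 = lam i) (hoff : ∀ j, j ≠ i → mu j = lam j) :
    hookProd m lam * hookProd m (rectComplement m n mu)
      = ((m - ((i : ℕ) + 1) + lam i) * (n + ((i : ℕ) + 1) - lam i)) *
        (hookProd m (rectComplement m n lam) * hookProd m mu) := by
  set b := betaNumber m lam
  set b' := betaNumber m mu
  have hbi : b i = b' i + 1 := by simp only [b, b', betaNumber]; omega
  have hboff : ∀ j, j ≠ i → b j = b' j := fun j hj => by
    simp only [b, b', betaNumber, hoff j hj]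
  have hbi_le : b i ≤ m + n - 1 := betaNumber_le hlle i
  have hfact : ∏ j, (b j)! = b i * ∏ j, (b' j)! :=
    Fintype.prod_eq_mul_prod_of_eq_off (by rw [hbi, factorial_succ]) fun j hj => by
      rw [hboff j hj]
  have hfact_compl :
      ∏ j, (m + n - 1 - b' j)! = (m + n - 1 - b i + 1) * ∏ j, (m + n - 1 - b j)! :=
    Fintype.prod_eq_mul_prod_of_eq_off (by rw [← factorial_succ]; congr 1; omega) fun j hj => by
      rw [hboff j hj]
  have hcoeff : (m - ((i : ℕ) + 1) + lam i) * (n + ((i : ℕ) + 1) - lam i) =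
      b i * (m + n - 1 - b i + 1) := by
    have := i.isLt
    simp only [b, betaNumber] at hbi_le ⊢
    congr 1 <;> omega
  refine Nat.eq_of_mul_eq_mul_right (mul_pos (diffProd_pos (betaNumber_strictAnti hlanti))
    (diffProd_pos (betaNumber_strictAnti hmanti))) ?_
  calc _ = (hookProd m lam * diffProd b) * (hookProd m (rectComplement m n mu) * diffProd b') := by
        ring
    _ = (∏ j, (b j)!) * ∏ j, (m + n - 1 - b' j)! := by
        rw [hookProd_mul_diffProd hlanti, hookProd_rectComplement_mul_diffProd hmanti hmle]
    _ = b i * (m + n - 1 - b i + 1) * ((∏ j, (m + n - 1 - b j)!) * ∏ j, (b' j)!) := by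
        rw [hfact, hfact_compl]
        ring
    _ = _ := by
        rw [← hookProd_mul_diffProd hmanti, ← hookProd_rectComplement_mul_diffProd hlanti hlle,
          hcoeff]
        ring
end

section
/- For a strict partition λ = (λ_1 > λ_2 > ... > λ_ℓ > 0), the product of shifted hook lengths g_λ satisfies Schur's formula: g_λ = (∏_i λ_i!) · (∏_{i<j} (λ_i + λ_j)) / (∏_{i<j} (λ_i - λ_j)). -/
section
variable (l : ℕ) (lam : Fin l → ℕ)

/-- The row lengths (0-indexed) of the double diagram `D(λ)` of a strict partition `λ`,
i.e. the partition with Frobenius coordinates `(λ_1,…,λ_ℓ | λ_1-1,…,λ_ℓ-1)`: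
row `i` has length `λ_i + i` (1-indexed) for `i ≤ ℓ`, and for `i > ℓ` it is the
number of columns of `D(λ)` of length at least `i`. -/
def doubleRow (i : ℕ) : ℕ :=
  if h : i < l then lam ⟨i, h⟩ + i + 1
  else (Finset.univ.filter (fun j : Fin l => i < (j : ℕ) + lam j)).card

/-- The column lengths (0-indexed) of the double diagram `D(λ)`. -/
def doubleCol (j : ℕ) : ℕ :=
  ((Finset.range (l + (if h : 0 < l then lam ⟨0, h⟩ else 0))).filter
    (fun i => j < doubleRow l lam i)).card

/-- The product `g_λ` of the shifted hook lengths of a strict partition `λ`: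
the box in row `i` (0-indexed), `t`-th box of the row, of the shifted diagram `S(λ)`
sits at position `(i, i+1+t)` of the double diagram `D(λ)`, and its shifted hook
length is its ordinary hook length there. -/
def shiftedHookProd : ℕ :=
  ∏ i : Fin l, ∏ t ∈ Finset.range (lam i),
    (doubleRow l lam i + doubleCol l lam ((i : ℕ) + 1 + t) - ((i : ℕ) + ((i : ℕ) + 1 + t) + 1))

end

namespace SchurAux

open Finset

variable {l : ℕ} {lam : Fin l → ℕ}

/-- number of rows `k` with `c ≤ lam k + k` -/
def N (l : ℕ) (lam : Fin l → ℕ) (c : ℕ) : ℕ :=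
  (Finset.univ.filter (fun k : Fin l => c ≤ lam k + k)).card

lemma key (hstrict : StrictAnti lam) :
    ∀ b (hb : b < l) a (ha : a < l), a ≤ b → lam ⟨b, hb⟩ + b ≤ lam ⟨a, ha⟩ + a := by
  intro b
  induction b with
  | zero =>
    intro hb a ha h
    have : a = 0 := by omega
    subst this; exact le_rfl
  | succ b ih =>
    intro hb a ha h
    rcases Nat.eq_or_lt_of_le h with h' | h'
    · subst h'; exact le_rfl
    · have hb' : b < l := by omega
      have h2 := ih hb' a ha (by omega)
      have h3 : lam ⟨b + 1, hb⟩ < lam ⟨b, hb'⟩ := hstrict (by simp [Fin.lt_def])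
      omega

lemma mu_anti (hstrict : StrictAnti lam) {j k : Fin l} (h : (j : ℕ) ≤ k) :
    lam k + (k : ℕ) ≤ lam j + (j : ℕ) := by
  have := key hstrict k k.2 j j.2 h
  simpa using this

lemma mu_ge_l (hstrict : StrictAnti lam) (hpos : ∀ i, 0 < lam i) (k : Fin l) :
    l ≤ lam k + (k : ℕ) := by
  have hl : 0 < l := k.pos
  have h1 := key hstrict (l - 1) (by omega) (k : ℕ) k.2 (by omega)
  have h2 := hpos ⟨l - 1, by omega⟩
  rw [Fin.eta] at h1
  omega

lemma mu_le_lam0 (hstrict : StrictAnti lam) (k : Fin l) :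
    lam k + (k : ℕ) ≤ lam ⟨0, k.pos⟩ := by
  have := key hstrict k k.2 0 k.pos (Nat.zero_le _)
  simpa using this

lemma N_le (c : ℕ) : N l lam c ≤ l := by
  classical
  calc N l lam c ≤ (Finset.univ : Finset (Fin l)).card := card_filter_le _ _
  _ = l := by simp

lemma N_anti {c c' : ℕ} (h : c ≤ c') : N l lam c' ≤ N l lam c := by
  apply card_le_card
  intro k hk
  simp only [mem_filter, mem_univ, true_and] at hk ⊢
  omega

lemma N_ge (hstrict : StrictAnti lam) (j : Fin l) {c : ℕ} (h : c ≤ lam j + j) :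
    (j : ℕ) + 1 ≤ N l lam c := by
  have hsub : Finset.Iic j ⊆ Finset.univ.filter (fun k : Fin l => c ≤ lam k + k) := by
    intro k hk
    simp only [mem_Iic] at hk
    simp only [mem_filter, mem_univ, true_and]
    have := mu_anti hstrict (show (k : ℕ) ≤ j from hk)
    omega
  have := card_le_card hsub
  rwa [Fin.card_Iic] at this

lemma N_lt (hstrict : StrictAnti lam) (j : Fin l) {c : ℕ} (h : lam j + j < c) :
    N l lam c ≤ (j : ℕ) := by
  have hsub : Finset.univ.filter (fun k : Fin l => c ≤ lam k + k) ⊆ Finset.Iio j := by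
    intro k hk
    simp only [mem_filter, mem_univ, true_and] at hk
    simp only [mem_Iio]
    by_contra hcon
    push_neg at hcon
    have := mu_anti hstrict (show (j : ℕ) ≤ k from hcon)
    omega
  have := card_le_card hsub
  rwa [Fin.card_Iio] at this

lemma doubleRow_fin (i : Fin l) : doubleRow l lam i = lam i + (i : ℕ) + 1 := by
  rw [doubleRow, dif_pos i.2]

lemma doubleRow_ge {i : ℕ} (h : l ≤ i) : doubleRow l lam i = N l lam (i + 1) := by
  rw [doubleRow, dif_neg (by omega), N]
  congr 1
  apply filter_congr
  intro k _
  omega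

lemma card_filter_range (n : ℕ) (p : ℕ → Prop) [DecidablePred p] :
    ((Finset.range n).filter p).card = (Finset.univ.filter (fun k : Fin n => p k)).card := by
  rw [Finset.card_filter, Finset.card_filter, ← Fin.sum_univ_eq_sum_range (fun i => if p i then 1 else 0)]

lemma doubleCol_split (hl : 0 < l) (c : ℕ) :
    doubleCol l lam c =
      ((Finset.range l).filter (fun i => c < doubleRow l lam i)).card
      + ((Finset.Ico l (l + lam ⟨0, hl⟩)).filter (fun i => c < doubleRow l lam i)).card := by
  rw [doubleCol, dif_pos hl, range_eq_Ico,
    ← Finset.Ico_union_Ico_eq_Ico (Nat.zero_le l) (Nat.le_add_right _ _),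
    Finset.filter_union, Finset.card_union_of_disjoint, ← range_eq_Ico]
  exact Finset.disjoint_filter_filter (Finset.Ico_disjoint_Ico_consecutive 0 l _)

lemma doubleCol_lt (hstrict : StrictAnti lam) (hpos : ∀ i, 0 < lam i)
    (hl : 0 < l) {c : ℕ} (hc : c < l) :
    doubleCol l lam c = lam ⟨c, hc⟩ + c := by
  rw [doubleCol_split hl c]
  have h1 : ((Finset.range l).filter (fun i => c < doubleRow l lam i)) = Finset.range l := by
    apply filter_true_of_mem
    intro i hi
    rw [mem_range] at hi
    have : doubleRow l lam i = lam ⟨i, hi⟩ + i + 1 := doubleRow_fin ⟨i, hi⟩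
    have := mu_ge_l hstrict hpos ⟨i, hi⟩
    simp only [Fin.val_mk] at *
    omega
  have h2 : ((Finset.Ico l (l + lam ⟨0, hl⟩)).filter (fun i => c < doubleRow l lam i))
      = Finset.Ico l (lam ⟨c, hc⟩ + c) := by
    rw [show (Finset.Ico l (lam ⟨c, hc⟩ + c)) =
        (Finset.Ico l (l + lam ⟨0, hl⟩)).filter (fun i => i < lam ⟨c, hc⟩ + c) from ?_]
    · apply filter_congr
      intro i hi
      rw [mem_Ico] at hi
      rw [doubleRow_ge hi.1]
      constructor
      · intro h
        by_contra hcon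
        push_neg at hcon
        have := N_lt hstrict ⟨c, hc⟩ (show lam ⟨c, hc⟩ + (⟨c, hc⟩ : Fin l) < i + 1 by
          simp only [Fin.val_mk]; omega)
        simp only [Fin.val_mk] at this
        omega
      · intro h
        have := N_ge hstrict ⟨c, hc⟩ (show i + 1 ≤ lam ⟨c, hc⟩ + (⟨c, hc⟩ : Fin l) by
          simp only [Fin.val_mk]; omega)
        simp only [Fin.val_mk] at this
        omega
    · rw [Finset.Ico_filter_lt]
      congr 1
      have h3 := mu_le_lam0 hstrict ⟨c, hc⟩
      simp only [Fin.val_mk] at h3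
      have : (⟨0, hl⟩ : Fin l) = ⟨0, (⟨c, hc⟩ : Fin l).pos⟩ := rfl
      omega
  rw [h1, h2, card_range, Nat.card_Ico]
  have := mu_ge_l hstrict hpos ⟨c, hc⟩
  simp only [Fin.val_mk] at this
  omega

lemma doubleCol_ge (hstrict : StrictAnti lam) (hl : 0 < l) {c : ℕ} (hc : l ≤ c) :
    doubleCol l lam c = N l lam c := by
  rw [doubleCol_split hl c]
  have h2 : ((Finset.Ico l (l + lam ⟨0, hl⟩)).filter (fun i => c < doubleRow l lam i)) = ∅ := by
    apply filter_false_of_mem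
    intro i hi
    rw [mem_Ico] at hi
    rw [doubleRow_ge hi.1]
    have := N_le (l := l) (lam := lam) (i + 1)
    omega
  rw [h2, card_filter_range l (fun i => c < doubleRow l lam i)]
  simp only [card_empty, add_zero, N]
  congr 1
  apply filter_congr
  intro k _
  rw [doubleRow_fin k]
  omega

lemma row_split (hstrict : StrictAnti lam) (hpos : ∀ i, 0 < lam i) (i : Fin l) :
    (∏ t ∈ Finset.range (lam i),
      (doubleRow l lam i + doubleCol l lam ((i : ℕ) + 1 + t) - ((i : ℕ) + ((i : ℕ) + 1 + t) + 1)))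
    = (∏ j ∈ Finset.univ.filter (fun j : Fin l => i < j), (lam i + lam j)) *
      (∏ c ∈ Finset.Ico l ((i : ℕ) + 1 + lam i), (lam i + N l lam c - c)) := by
  have hl : 0 < l := i.pos
  have hmu := mu_ge_l hstrict hpos i
  set m := l - 1 - (i : ℕ) with hm
  have hmn : m ≤ lam i := by omega
  rw [range_eq_Ico, ← Finset.prod_Ico_consecutive _ (Nat.zero_le m) hmn]
  congr 1
  · rw [← range_eq_Ico]
    apply Finset.prod_bij
      (fun t ht => (⟨(i : ℕ) + 1 + t, by rw [mem_range] at ht; omega⟩ : Fin l))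
    · intro a ha
      simp only [mem_filter, mem_univ, true_and, Fin.lt_def, Fin.val_mk]
      omega
    · intro a ha b hb hab
      have := congrArg Fin.val hab
      simp only [Fin.val_mk] at this
      omega
    · intro j hj
      simp only [mem_filter, mem_univ, true_and, Fin.lt_def] at hj
      refine ⟨(j : ℕ) - (i : ℕ) - 1, ?_, ?_⟩
      · rw [mem_range]; have := j.2; omega
      · apply Fin.ext; simp only [Fin.val_mk]; omega
    · intro t ht
      rw [mem_range] at ht
      have hcl : (i : ℕ) + 1 + t < l := by omega
      rw [doubleRow_fin i, doubleCol_lt hstrict hpos hl hcl]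
      omega
  · rw [Finset.prod_Ico_eq_prod_range, Finset.prod_Ico_eq_prod_range]
    have hr : lam i - m = (i : ℕ) + 1 + lam i - l := by omega
    rw [hr]
    apply Finset.prod_congr rfl
    intro k hk
    rw [mem_range] at hk
    have hcl : l ≤ (i : ℕ) + 1 + (m + k) := by omega
    have h1 : (i : ℕ) + 1 + (m + k) = l + k := by omega
    rw [doubleRow_fin i, doubleCol_ge hstrict hl hcl, h1]
    omega

lemma prod_Icc_id_factorial (n : ℕ) : ∏ x ∈ Finset.Icc 1 n, x = n.factorial := by
  induction n with
  | zero => simp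
  | succ n ih => rw [Finset.prod_Icc_succ_top (by omega), ih, Nat.factorial_succ, mul_comm]

lemma row_fact (hstrict : StrictAnti lam) (hpos : ∀ i, 0 < lam i) (i : Fin l) :
    (∏ c ∈ Finset.Ico l ((i : ℕ) + 1 + lam i), (lam i + N l lam c - c)) *
      (∏ j ∈ Finset.univ.filter (fun j : Fin l => i < j), (lam i - lam j))
    = (lam i).factorial := by
  classical
  have hl : 0 < l := i.pos
  have hmu := mu_ge_l hstrict hpos i
  set n := lam i with hn
  set S := Finset.Ico l ((i : ℕ) + 1 + n) with hS
  set T := Finset.univ.filter (fun j : Fin l => i < j) with hT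
  set g : ℕ → ℕ := fun c => n + N l lam c - c with hg
  have hgS : ∀ c ∈ S, (i : ℕ) + 1 ≤ N l lam c ∧ N l lam c ≤ c ∧ c < (i : ℕ) + 1 + n ∧ l ≤ c := by
    intro c hc
    rw [hS, mem_Ico] at hc
    refine ⟨?_, le_trans (N_le c) hc.1, hc.2, hc.1⟩
    exact N_ge hstrict i (by omega)
  have hg1 : ∀ c ∈ S, 1 ≤ g c ∧ g c ≤ n := by
    intro c hc
    obtain ⟨h1, h2, h3, h4⟩ := hgS c hc
    rw [hg]
    constructor <;> simp only <;> omega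
  have hganti : ∀ c ∈ S, ∀ c' ∈ S, c < c' → g c' < g c := by
    intro c hc c' hc' hlt
    obtain ⟨h1, h2, h3, h4⟩ := hgS c hc
    obtain ⟨h1', h2', h3', h4'⟩ := hgS c' hc'
    have := N_anti (lam := lam) (le_of_lt hlt)
    rw [hg]
    simp only
    omega
  have hgB : ∀ c ∈ S, ∀ j ∈ T, g c ≠ n - lam j := by
    intro c hc j hj
    rw [hT, mem_filter] at hj
    have hij : (i : ℕ) < (j : ℕ) := Fin.lt_def.mp hj.2
    have hlam : lam j < n := hstrict hj.2
    obtain ⟨h1, h2, h3, h4⟩ := hgS c hc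
    rw [hg]
    simp only
    rcases le_or_gt c (lam j + (j : ℕ)) with hcase | hcase
    · have := N_ge hstrict j hcase
      omega
    · have := N_lt hstrict j hcase
      omega
  set A := S.image g with hA
  set B := T.image (fun j => n - lam j) with hB
  have hgInj : Set.InjOn g ↑S := by
    intro a ha b hb hab
    have ha' := Finset.mem_coe.mp ha
    have hb' := Finset.mem_coe.mp hb
    by_contra hne
    rcases Nat.lt_or_ge a b with h | h
    · have := hganti a ha' b hb' h
      omega
    · have := hganti b hb' a ha' (by omega)
      omega
  have hBInj : Set.InjOn (fun j => n - lam j) ↑T := by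
    intro a ha b hb hab
    simp only at hab
    have ha' := Finset.mem_coe.mp ha
    have hb' := Finset.mem_coe.mp hb
    rw [hT, mem_filter] at ha' hb'
    have h1 : lam a < n := hstrict ha'.2
    have h2 : lam b < n := hstrict hb'.2
    exact hstrict.injective (by omega)
  have hdisj : Disjoint A B := by
    rw [Finset.disjoint_left]
    rintro x hx hx'
    rw [hA, Finset.mem_image] at hx
    rw [hB, Finset.mem_image] at hx'
    obtain ⟨c, hc, rfl⟩ := hx
    obtain ⟨j, hj, hjx⟩ := hx'
    exact hgB c hc j hj hjx.symm
  have hcardA : A.card = (i : ℕ) + 1 + n - l := by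
    rw [hA, Finset.card_image_of_injOn hgInj, hS, Nat.card_Ico]
  have hcardT : T.card = l - 1 - (i : ℕ) := by
    have h0 := Finset.card_filter_add_card_filter_not
      (s := (Finset.univ : Finset (Fin l))) (p := fun j : Fin l => i < j)
    have h1 : Finset.univ.filter (fun j : Fin l => ¬ i < j) = Finset.Iic i := by
      ext k
      simp [not_lt]
    rw [h1, Fin.card_Iic] at h0
    rw [hT]
    simp only [card_univ, Fintype.card_fin] at h0
    omega
  have hcardB : B.card = l - 1 - (i : ℕ) := by
    rw [hB, Finset.card_image_of_injOn hBInj, hcardT]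
  have hunion : A ∪ B = Finset.Icc 1 n := by
    apply Finset.eq_of_subset_of_card_le
    · intro x hx
      rw [Finset.mem_union] at hx
      rw [Finset.mem_Icc]
      rcases hx with hx | hx
      · rw [hA, Finset.mem_image] at hx
        obtain ⟨c, hc, rfl⟩ := hx
        exact ⟨(hg1 c hc).1, (hg1 c hc).2⟩
      · rw [hB, Finset.mem_image] at hx
        obtain ⟨j, hj, rfl⟩ := hx
        rw [hT, mem_filter] at hj
        have := hstrict hj.2
        have := hpos j
        constructor <;> omega
    · rw [Finset.card_union_of_disjoint hdisj, Nat.card_Icc, hcardA, hcardB]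
      have := i.2
      omega
  have e1 : (∏ c ∈ S, (n + N l lam c - c)) = ∏ x ∈ A, x := by
    rw [hA]
    rw [Finset.prod_image (fun x hx y hy hxy => hgInj (Finset.mem_coe.mpr hx) (Finset.mem_coe.mpr hy) hxy)]
  have e2 : (∏ j ∈ T, (n - lam j)) = ∏ x ∈ B, x := by
    rw [hB]
    rw [Finset.prod_image (fun x hx y hy hxy => hBInj (Finset.mem_coe.mpr hx) (Finset.mem_coe.mpr hy) hxy)]
  rw [e1, e2, ← Finset.prod_union hdisj, hunion, prod_Icc_id_factorial]

end SchurAux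

/-- Schur's formula: for a strict partition `λ = (λ_1 > ⋯ > λ_ℓ > 0)`,
`g_λ = (∏_i λ_i!) ∏_{i<j} (λ_i + λ_j) / ∏_{i<j} (λ_i - λ_j)`,
stated multiplicatively. -/
theorem shiftedHookProd_schur_formula (l : ℕ) (lam : Fin l → ℕ)
    (hstrict : StrictAnti lam) (hpos : ∀ i, 0 < lam i) :
    shiftedHookProd l lam *
      ∏ i : Fin l, ∏ j ∈ Finset.univ.filter (fun j : Fin l => i < j), (lam i - lam j)
    = (∏ i : Fin l, Nat.factorial (lam i)) *
      ∏ i : Fin l, ∏ j ∈ Finset.univ.filter (fun j : Fin l => i < j), (lam i + lam j) := by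
  rcases Nat.eq_zero_or_pos l with rfl | hl
  · simp [shiftedHookProd]
  rw [shiftedHookProd, ← Finset.prod_mul_distrib, ← Finset.prod_mul_distrib]
  apply Finset.prod_congr rfl
  intro i _
  rw [SchurAux.row_split hstrict hpos i, mul_assoc, SchurAux.row_fact hstrict hpos i]
  exact mul_comm _ _
end

section
/- Let λ and μ be strict partitions whose parts lie in {1,...,n-1}, such that the set of parts of λ equals the set of parts of μ with the part k-1 replaced by k (for some k with 2 ≤ k ≤ n-1, where k is a part of λ and k-1 is a part of μ, k-1 not a part of λ and k not a part of μ; all other parts agree). Then g_λ · g_{μ'} / (g_{λ'} · g_μ) = n(n-1) - k(k-1), where ν' denotes the complement of ν in {1,...,n-1} and g_ν is given by Schur's formula g_ν = (∏_i ν_i!) ∏_{i<j}(ν_i+ν_j)/∏_{i<j}(ν_i-ν_j). -/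
/-- Schur's expression `g_ν = (∏_i ν_i!) ∏_{i<j}(ν_i+ν_j) / ∏_{i<j}(ν_i-ν_j)`
for a strict partition `ν` regarded as a finite set of distinct positive integers. -/
def gSchur (nu : Finset ℕ) : ℚ :=
  (∏ a ∈ nu, (Nat.factorial a : ℚ)) *
    ∏ p ∈ nu.offDiag.filter (fun p => p.2 < p.1),
      (((p.1 : ℚ) + (p.2 : ℚ)) / ((p.1 : ℚ) - (p.2 : ℚ)))

/-- The complement of a strict partition with parts in `{1, …, n-1}`. -/
def strictComplement (n : ℕ) (lam : Finset ℕ) : Finset ℕ :=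
  Finset.Icc 1 (n - 1) \ lam

/-!
Adding a part `t` to a strict partition `ν ∌ t` multiplies `g_ν` by
`t! ∏_{s ∈ ν} (t+s)/|t-s|`. Hence replacing a part `k-1` by `k` multiplies `g` by
`k ∏_s r(s)` with `r(s) = (k+s)|k-1-s| / ((k-1+s)|k-s|) = d(s+1)/d(s)`, where
`d(s) = pronicGap k s = s(s-1) - k(k-1)`. In the ratio of the theorem `s` runs over `λ ∖ {k}`
and over the complement of `λ ∪ {k-1}`, that is over `{1, …, n-1} ∖ {k-1, k}`, so the product
telescopes to `d(n)/k²`, and the two factors `k` cancel the `k²`.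
-/

open Finset

theorem Finset.prod_Ico_div₀ {G : Type*} [CommGroupWithZero G] (f : ℕ → G) {m n : ℕ}
    (hmn : m ≤ n) (hm : f m ≠ 0) (hf : ∀ i ∈ Ico m n, f i ≠ 0) :
    ∏ i ∈ Ico m n, f (i + 1) / f i = f n / f m := by
  induction n, hmn using Nat.le_induction with
  | base => simp [hm]
  | succ n hmn ih =>
    have hn : f n ≠ 0 := hf n (mem_Ico.2 ⟨hmn, n.lt_succ_self⟩)
    rw [prod_Ico_succ_top hmn, ih fun i hi => hf i (by simp only [mem_Ico] at hi ⊢; omega),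
      div_mul_div_comm, mul_comm, mul_div_mul_right _ _ hn]

theorem Finset.prod_mul_prod_sdiff_insert_insert {ι M : Type*} [DecidableEq ι] [CommMonoid M]
    {U S : Finset ι} {a b : ι} (f : ι → M) (hS : S ⊆ U \ {a, b}) :
    (∏ x ∈ S, f x) * ∏ x ∈ U \ insert a (insert b S), f x = ∏ x ∈ U \ {a, b}, f x := by
  have hcompl : U \ insert a (insert b S) = (U \ {a, b}) \ S := by
    rw [sdiff_sdiff_left, sup_eq_union, insert_union, singleton_union]
  rw [hcompl, mul_comm, prod_sdiff hS]

lemma gSchur_pos (ν : Finset ℕ) : 0 < gSchur ν := by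
  refine mul_pos (prod_pos fun a _ => by positivity) (prod_pos fun p hp => ?_)
  have hlt : (p.2 : ℚ) < p.1 := by simp only [mem_filter] at hp; exact_mod_cast hp.2
  have : (0 : ℚ) ≤ p.2 := by positivity
  exact div_pos (by linarith) (by linarith)

lemma gSchur_eq_prod_prod (ν : Finset ℕ) :
    gSchur ν = (∏ a ∈ ν, (a.factorial : ℚ)) *
      ∏ a ∈ ν, ∏ b ∈ ν, if b < a then ((a : ℚ) + b) / ((a : ℚ) - b) else 1 := by
  have : ν.offDiag.filter (fun p => p.2 < p.1) = (ν ×ˢ ν).filter (fun p => p.2 < p.1) := by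
    ext p; simp only [mem_filter, mem_offDiag, mem_product]; grind
  rw [gSchur, this, prod_filter, prod_product]

def schurFactor (t s : ℕ) : ℚ := ((t : ℚ) + s) / |(t : ℚ) - s|

lemma gSchur_insert {t : ℕ} {S : Finset ℕ} (ht : t ∉ S) :
    gSchur (insert t S) = t.factorial * (∏ s ∈ S, schurFactor t s) * gSchur S := by
  have hpair : ∀ s ∈ S,
      ((if s < t then ((t : ℚ) + s) / ((t : ℚ) - s) else 1) *
        if t < s then ((s : ℚ) + t) / ((s : ℚ) - t) else 1) = schurFactor t s := by
    intro s hs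
    rcases lt_or_gt_of_ne (ne_of_mem_of_not_mem hs ht) with h | h
    · have : (s : ℚ) < t := by exact_mod_cast h
      rw [schurFactor, if_pos h, if_neg h.not_gt, abs_of_pos (by linarith), mul_one]
    · have : (t : ℚ) < s := by exact_mod_cast h
      rw [schurFactor, if_neg h.not_gt, if_pos h, abs_of_neg (by linarith), one_mul, neg_sub,
        add_comm]
  simp only [gSchur_eq_prod_prod, prod_insert ht, lt_irrefl, if_false, one_mul, prod_mul_distrib,
    ← prod_congr rfl hpair]
  ring

def pronicGap (k s : ℕ) : ℚ := (s : ℚ) * ((s : ℚ) - 1) - (k : ℚ) * ((k : ℚ) - 1)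

lemma pronicGap_eq_mul (k s : ℕ) : pronicGap k s = ((s : ℚ) - k) * ((s : ℚ) + k - 1) := by
  unfold pronicGap; ring

lemma pronicGap_ne_zero {k s : ℕ} (hsk : s ≠ k) (h2 : 2 ≤ s + k) : pronicGap k s ≠ 0 := by
  have h2' : (2 : ℚ) ≤ s + k := by exact_mod_cast h2
  rw [pronicGap_eq_mul]
  exact mul_ne_zero (sub_ne_zero.2 (by exact_mod_cast hsk)) (by linarith)

lemma schurFactor_succ {j s : ℕ} (hj : s ≠ j) (hj1 : s ≠ j + 1) :
    schurFactor (j + 1) s =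
      schurFactor j s * (pronicGap (j + 1) (s + 1) / pronicGap (j + 1) s) := by
  rw [schurFactor, schurFactor, pronicGap_eq_mul, pronicGap_eq_mul]
  push_cast
  have hsj1 : (s : ℚ) - (j + 1) ≠ 0 := sub_ne_zero.2 (by exact_mod_cast hj1)
  have hsj : (s : ℚ) + (j + 1) - 1 ≠ 0 := by
    rw [show (s : ℚ) + (j + 1) - 1 = ((s + j : ℕ) : ℚ) by push_cast; ring]
    exact_mod_cast (show s + j ≠ 0 by omega)
  rcases lt_or_gt_of_ne hj with h | h
  · have : (s : ℚ) < j := by exact_mod_cast h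
    rw [abs_of_pos (by linarith), abs_of_pos (by linarith), div_mul_div_comm,
      div_eq_div_iff (by linarith) (mul_ne_zero (by linarith) (mul_ne_zero hsj1 hsj))]
    ring
  · have : (j : ℚ) + 1 < s := by exact_mod_cast (show j + 1 < s by omega)
    rw [abs_of_neg (by linarith), abs_of_neg (by linarith), div_mul_div_comm,
      div_eq_div_iff (by linarith) (mul_ne_zero (by linarith) (mul_ne_zero hsj1 hsj))]
    ring

lemma gSchur_insert_succ {j : ℕ} {T : Finset ℕ} (hj : j ∉ T) (hj1 : j + 1 ∉ T) :
    gSchur (insert (j + 1) T) = (j + 1 : ℚ) *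
      (∏ s ∈ T, pronicGap (j + 1) (s + 1) / pronicGap (j + 1) s) * gSchur (insert j T) := by
  rw [gSchur_insert hj1, gSchur_insert hj,
    prod_congr rfl fun s hs => schurFactor_succ (ne_of_mem_of_not_mem hs hj)
      (ne_of_mem_of_not_mem hs hj1),
    prod_mul_distrib, Nat.factorial_succ]
  push_cast
  ring

lemma prod_pronicGap_succ_div {j n : ℕ} (hj : 1 ≤ j) (hjn : j + 2 ≤ n) :
    ∏ s ∈ Icc 1 (n - 1) \ {j, j + 1}, pronicGap (j + 1) (s + 1) / pronicGap (j + 1) s =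
      pronicGap (j + 1) n / ((j : ℚ) + 1) ^ 2 := by
  have hsplit : Icc 1 (n - 1) \ {j, j + 1} = Ico 1 j ∪ Ico (j + 2) n := by
    ext s; simp only [mem_sdiff, mem_Icc, mem_Ico, mem_union, mem_insert, mem_singleton]; omega
  have hdisj : Disjoint (Ico 1 j) (Ico (j + 2) n) :=
    disjoint_left.2 fun s hs hs' => by simp only [mem_Ico] at hs hs'; omega
  have hne : ∀ s, 1 ≤ s → s ≠ j + 1 → pronicGap (j + 1) s ≠ 0 :=
    fun s hs hsj => pronicGap_ne_zero hsj (by omega)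
  rw [hsplit, prod_union hdisj,
    prod_Ico_div₀ _ hj (hne 1 le_rfl (by omega))
      fun s hs => hne s (mem_Ico.1 hs).1 (by rw [mem_Ico] at hs; omega),
    prod_Ico_div₀ _ (by omega) (hne (j + 2) (by omega) (by omega))
      fun s hs => hne s (by rw [mem_Ico] at hs; omega) (by rw [mem_Ico] at hs; omega)]
  have hj' : (1 : ℚ) ≤ j := by exact_mod_cast hj
  have h1 : pronicGap (j + 1) 1 = -(((j : ℚ) + 1) * j) := by
    simp only [pronicGap]; push_cast; ring
  have hjj : pronicGap (j + 1) j = -2 * j := by simp only [pronicGap]; push_cast; ring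
  have hj2 : pronicGap (j + 1) (j + 2) = 2 * ((j : ℚ) + 1) := by
    simp only [pronicGap]; push_cast; ring
  rw [h1, hjj, hj2]
  field_simp

theorem gSchur_ratio_lower_part_general (n k : ℕ) (lam mu : Finset ℕ)
    (hlam : lam ⊆ Finset.Icc 1 (n - 1))
    (hk2 : 2 ≤ k) (hkn : k ≤ n - 1)
    (hkl : k ∈ lam) (hkl' : k - 1 ∉ lam)
    (hmueq : mu = insert (k - 1) (lam.erase k)) :
    gSchur lam * gSchur (strictComplement n mu) /
        (gSchur (strictComplement n lam) * gSchur mu)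
      = (n : ℚ) * ((n : ℚ) - 1) - (k : ℚ) * ((k : ℚ) - 1) := by
  obtain ⟨j, rfl⟩ : ∃ j, k = j + 1 := ⟨k - 1, by omega⟩
  rw [Nat.add_sub_cancel] at hkl' hmueq
  set S := lam.erase (j + 1)
  set C := Icc 1 (n - 1) \ insert j (insert (j + 1) S) with hC
  have hjS : j ∉ S := fun h => hkl' (mem_of_mem_erase h)
  have hj1S : j + 1 ∉ S := notMem_erase _ _
  have hlam' : lam = insert (j + 1) S := (insert_erase hkl).symm
  have hcl : strictComplement n lam = insert j C := by
    rw [hlam', strictComplement, hC,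
      sdiff_insert_insert_of_mem_of_notMem (mem_Icc.2 ⟨by omega, by omega⟩) (by simp [hjS])]
  have hcm : strictComplement n mu = insert (j + 1) C := by
    rw [hmueq, strictComplement, hC, insert_comm,
      sdiff_insert_insert_of_mem_of_notMem (mem_Icc.2 ⟨by omega, by omega⟩) (by simp [hj1S])]
  have hsub : S ⊆ Icc 1 (n - 1) \ {j, j + 1} := fun s hs =>
    mem_sdiff.2 ⟨hlam (mem_of_mem_erase hs), by
      rw [mem_insert, mem_singleton]; rintro (rfl | rfl) <;> contradiction⟩
  rw [hcl, hcm, hlam', hmueq, gSchur_insert_succ hjS hj1S,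
    gSchur_insert_succ (by simp [C]) (by simp [C])]
  have hgS := (gSchur_pos (insert j S)).ne'
  have hgC := (gSchur_pos (insert j C)).ne'
  calc _ = ((j : ℚ) + 1) ^ 2 * ((∏ s ∈ S, pronicGap (j + 1) (s + 1) / pronicGap (j + 1) s) *
        ∏ s ∈ C, pronicGap (j + 1) (s + 1) / pronicGap (j + 1) s) := by
        field_simp
    _ = ((j : ℚ) + 1) ^ 2 * (pronicGap (j + 1) n / ((j : ℚ) + 1) ^ 2) := by
      rw [prod_mul_prod_sdiff_insert_insert _ hsub,
        prod_pronicGap_succ_div (by omega) (by omega)]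
    _ = _ := by
      rw [pronicGap]
      field_simp

/-- If the strict partitions `λ` and `μ`, with parts in `{1, …, n-1}`, differ by
changing one part from `k` to `k-1` (with `2 ≤ k ≤ n-1`), then
`g_λ g_{μ'} / (g_{λ'} g_μ) = n(n-1) - k(k-1)`. -/
theorem gSchur_ratio_lower_part (n k : ℕ) (lam mu : Finset ℕ)
    (hlam : lam ⊆ Finset.Icc 1 (n - 1)) (hmu : mu ⊆ Finset.Icc 1 (n - 1))
    (hk2 : 2 ≤ k) (hkn : k ≤ n - 1)
    (hkl : k ∈ lam) (hkl' : k - 1 ∉ lam) (hkm : k ∉ mu) (hkm' : k - 1 ∈ mu)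
    (hmueq : mu = insert (k - 1) (lam.erase k)) :
    gSchur lam * gSchur (strictComplement n mu) /
        (gSchur (strictComplement n lam) * gSchur mu)
      = (n : ℚ) * ((n : ℚ) - 1) - (k : ℚ) * ((k : ℚ) - 1) :=
  gSchur_ratio_lower_part_general n k lam mu hlam hk2 hkn hkl hkl' hmueq
end

section
/- Let λ be a strict partition with parts in {1,...,n-1} having 1 as a part, and let μ be λ with the part 1 removed. Then g_λ · g_{μ'} / (g_{λ'} · g_μ) = n(n-1)/2, with notation as in Schur's formula and complements taken in {1,...,n-1}. -/
/-!
Every part of `μ` and of `λ'` exceeds `1`, and adjoining a part `b` smaller than all parts of `ν`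
multiplies `g_ν` by `b! ∏_{a ∈ ν} (a + b)/(a - b)`. Since `λ = μ ∪ {1}` and `μ' = λ' ∪ {1}`,
the ratio is `∏ (a + 1)/(a - 1)` over the disjoint union `μ ∪ λ' = {2, …, n-1}`, which telescopes
to `n(n-1)/2`.
-/

open Finset

lemma gSchur_ne_zero (S : Finset ℕ) : gSchur S ≠ 0 := by
  refine mul_ne_zero (prod_ne_zero_iff.2 fun a _ => by positivity) (prod_ne_zero_iff.2 ?_)
  rintro ⟨a, b⟩ hab
  have hba : (b : ℚ) < a := by exact_mod_cast (mem_filter.1 hab).2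
  have hb : (0 : ℚ) ≤ b := b.cast_nonneg
  exact div_ne_zero (by linarith) (sub_ne_zero.2 hba.ne')

lemma gSchur_insert_of_lt {S : Finset ℕ} {b : ℕ} (hb : ∀ a ∈ S, b < a) :
    gSchur (insert b S) =
      (b.factorial : ℚ) * gSchur S * ∏ a ∈ S, ((a : ℚ) + b) / ((a : ℚ) - b) := by
  have hbS : b ∉ S := fun h => (hb b h).false
  have hlower : ({b} ×ˢ S).filter (fun p : ℕ × ℕ => p.2 < p.1) = ∅ :=
    filter_false_of_mem fun p hp => by
      simp only [mem_product, mem_singleton] at hp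
      exact hp.1 ▸ (hb _ hp.2).le.not_gt
  have hupper : (S ×ˢ {b}).filter (fun p : ℕ × ℕ => p.2 < p.1) = S ×ˢ {b} :=
    filter_true_of_mem fun p hp => by
      simp only [mem_product, mem_singleton] at hp
      exact hp.2 ▸ hb _ hp.1
  have hdisj : Disjoint (S.offDiag.filter (fun p : ℕ × ℕ => p.2 < p.1)) (S ×ˢ {b}) :=
    disjoint_left.2 fun p hp hq => hbS <| by
      simp only [mem_filter, mem_offDiag, mem_product, mem_singleton] at hp hq
      exact hq.2 ▸ hp.1.2.1
  unfold gSchur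
  rw [prod_insert hbS, offDiag_insert hbS, filter_union, filter_union, hlower, hupper,
    union_empty, prod_union hdisj, prod_product]
  simp only [prod_singleton]
  ring

lemma prod_Icc_two_succ_div_pred {m : ℕ} (hm : 1 ≤ m) :
    ∏ a ∈ Icc 2 m, ((a : ℚ) + 1) / ((a : ℚ) - 1) = ((m : ℚ) + 1) * m / 2 := by
  induction m, hm using Nat.le_induction with
  | base => norm_num
  | succ k hk ih =>
    rw [prod_Icc_succ_top (by omega), ih]
    push_cast
    rw [add_sub_cancel_right]
    field_simp

lemma erase_one_union_strictComplement {n : ℕ} {lam : Finset ℕ} (hlam : lam ⊆ Icc 1 (n - 1))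
    (h1 : 1 ∈ lam) : lam.erase 1 ∪ strictComplement n lam = Icc 2 (n - 1) := by
  rw [strictComplement, ← erase_eq_of_notMem (s := Icc 1 (n - 1) \ lam) (a := 1)
      fun h => (mem_sdiff.1 h).2 h1,
    ← erase_union_distrib, union_sdiff_of_subset hlam, Icc_erase_left, ← Icc_add_one_left_eq_Ioc]
  rfl

/-- If `λ` is a strict partition with parts in `{1, …, n-1}` having `1` as a part
and `μ` is `λ` with the part `1` removed, then `g_λ g_{μ'} / (g_{λ'} g_μ) = n(n-1)/2`. -/
theorem gSchur_ratio_remove_one (n : ℕ) (lam mu : Finset ℕ)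
    (hlam : lam ⊆ Finset.Icc 1 (n - 1)) (h1 : 1 ∈ lam)
    (hmueq : mu = lam.erase 1) :
    gSchur lam * gSchur (strictComplement n mu) /
        (gSchur (strictComplement n lam) * gSchur mu)
      = (n : ℚ) * ((n : ℚ) - 1) / 2 := by
  subst hmueq
  have hn : 1 ≤ n - 1 := (mem_Icc.1 (hlam h1)).2
  have hparts : ∀ a ∈ lam.erase 1 ∪ strictComplement n lam, 1 < a := by
    rw [erase_one_union_strictComplement hlam h1]
    exact fun a ha => (mem_Icc.1 ha).1
  have hlam_eq : gSchur lam = gSchur (lam.erase 1) *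
      ∏ a ∈ lam.erase 1, ((a : ℚ) + 1) / ((a : ℚ) - 1) := by
    conv_lhs => rw [← insert_erase h1]
    simp [gSchur_insert_of_lt fun a ha => hparts a (mem_union_left _ ha)]
  have hcompl_eq : gSchur (strictComplement n (lam.erase 1)) = gSchur (strictComplement n lam) *
      ∏ a ∈ strictComplement n lam, ((a : ℚ) + 1) / ((a : ℚ) - 1) := by
    rw [strictComplement, sdiff_erase (mem_Icc.2 ⟨le_rfl, hn⟩), ← strictComplement]
    simp [gSchur_insert_of_lt fun a ha => hparts a (mem_union_right _ ha)]
  have hdisj : Disjoint (lam.erase 1) (strictComplement n lam) :=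
    disjoint_sdiff.mono_left (erase_subset 1 lam)
  rw [hlam_eq, hcompl_eq, mul_mul_mul_comm, mul_comm (gSchur _),
    mul_div_cancel_left₀ _ (mul_ne_zero (gSchur_ne_zero _) (gSchur_ne_zero _)),
    ← prod_union hdisj, erase_one_union_strictComplement hlam h1,
    prod_Icc_two_succ_div_pred hn, Nat.cast_sub (by omega)]
  ring
end

section
/- The number of standard Young tableaux of shape λ equals |λ|!/h_λ, where h_λ is the product of the hook lengths of λ (Frame–Robinson–Thrall hook length formula). -/
/-!
The largest entry of a standard filling sits in a corner cell `c`, and deleting it leaves a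
standard filling of `μ ∖ c`. Hence `#SYT(μ) = ∑_c #SYT(μ ∖ c)`, and by induction on `|μ|` it
suffices to show `∑_c h_μ / h_{μ ∖ c} = |μ|`, the sum running over the corners of `μ`.

For `k` at least the number of rows put `β_i = λ_i + k - 1 - i`. The hook lengths of row `i`
together with the differences `β_i - β_j` (`i < j < k`) are exactly `1, …, β_i`, so
`h_μ · ∏_{i<j} (β_i - β_j) = ∏_i β_i!`. Removing the corner of row `r` lowers `β_r` by one, whence
`h_μ / h_{μ ∖ c} = β_r ∏_{j ≠ r} (β_r - β_j - 1) / (β_r - β_j)`, an expression that vanishes on rows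
without a corner. Its sum over all `r < k` is `∑_i (β_i - i) = |μ|`: Lagrange interpolation at the
nodes `β_a` of `X ∏_j (X - β_j - 1) - (X - k) ∏_j (X - β_j)`, a polynomial of degree `< k` with
value `-β_a ∏_{j ≠ a} (β_a - β_j - 1)` at `β_a`, reads the sum off its coefficient of `X^(k-1)`.
-/

/-- The hook length of the (0-indexed) box `c = (i,j)` of a Young diagram `μ`:
the number of boxes to its right in its row, below it in its column, plus `1`;
equivalently `μ.rowLen i + μ.colLen j - (i + j + 1)`. -/
def hookLength (μ : YoungDiagram) (c : ℕ × ℕ) : ℕ :=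
  μ.rowLen c.1 + μ.colLen c.2 - (c.1 + c.2 + 1)

/-- The product of the hook lengths of a Young diagram. -/
def ydHookProd (μ : YoungDiagram) : ℕ :=
  ∏ c ∈ μ.cells, hookLength μ c

open Finset Polynomial Lagrange
open scoped Nat

section PairDiffProd

variable {R : Type*} [CommRing R]

def pairDiffProd (k : ℕ) (x : ℕ → R) : R :=
  ∏ i ∈ range k, ∏ j ∈ Ioo i k, (x i - x j)

theorem prod_range_prod_Ioo_eq_mul {M : Type*} [CommMonoid M] (F : ℕ → ℕ → M) {r k : ℕ}
    (hr : r < k) :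
    ∏ i ∈ range k, ∏ j ∈ Ioo i k, F i j =
      (∏ j ∈ Ioo r k, F r j) * (∏ i ∈ range r, F i r) *
        ∏ i ∈ (range k).erase r, ∏ j ∈ (Ioo i k).erase r, F i j := by
  have inner : ∀ i ∈ (range k).erase r, ∏ j ∈ Ioo i k, F i j =
      (if i < r then F i r else 1) * ∏ j ∈ (Ioo i k).erase r, F i j := by
    intro i hi
    split_ifs with h
    · exact (mul_prod_erase _ _ (mem_Ioo.2 ⟨h, hr⟩)).symm
    · rw [one_mul, erase_eq_of_notMem (by simp only [mem_Ioo]; omega)]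
  have column : ∏ i ∈ (range k).erase r, (if i < r then F i r else 1) = ∏ i ∈ range r, F i r := by
    rw [prod_ite, prod_const_one, mul_one]
    congr 1
    ext i
    simp only [mem_filter, mem_erase, mem_range]
    omega
  rw [← mul_prod_erase _ _ (mem_range.2 hr), prod_congr rfl inner, prod_mul_distrib, column,
    mul_assoc]

theorem prod_range_erase_eq_mul {M : Type*} [CommMonoid M] (f : ℕ → M) {r k : ℕ} (hr : r < k) :
    ∏ j ∈ (range k).erase r, f j = (∏ j ∈ Ioo r k, f j) * ∏ j ∈ range r, f j := by
  rw [← prod_union (disjoint_left.2 fun j h₁ h₂ => by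
    simp only [mem_Ioo, mem_range] at h₁ h₂; omega)]
  congr 1
  ext j
  simp only [mem_erase, mem_range, mem_union, mem_Ioo]
  omega

theorem pairDiffProd_ne_zero [IsDomain R] {k : ℕ} {x : ℕ → R} (hx : Set.InjOn x (range k)) :
    pairDiffProd k x ≠ 0 := by
  refine prod_ne_zero_iff.2 fun i hi => prod_ne_zero_iff.2 fun j hj => sub_ne_zero.2 fun h => ?_
  have := hx (mem_coe.2 hi) (by simp only [coe_range, Set.mem_Iio]; exact (mem_Ioo.1 hj).2) h
  have := (mem_Ioo.1 hj).1
  omega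

theorem pairDiffProd_update_sub_one {K : Type*} [Field K] {r k : ℕ} (hr : r < k) (x : ℕ → K)
    (hx : Set.InjOn x (range k)) :
    pairDiffProd k (Function.update x r (x r - 1)) =
      pairDiffProd k x * ∏ j ∈ (range k).erase r, (x r - x j - 1) / (x r - x j) := by
  set y := Function.update x r (x r - 1)
  have hyr : y r = x r - 1 := Function.update_self ..
  have hy : ∀ j, j ≠ r → y j = x j := fun j hj => Function.update_of_ne hj ..
  have hne : ∀ j < k, j ≠ r → x r - x j ≠ 0 := fun j hj hjr =>
    sub_ne_zero.2 fun h => hjr (hx (by simpa using hj) (by simpa using hr) h.symm)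
  have rest : ∏ i ∈ (range k).erase r, ∏ j ∈ (Ioo i k).erase r, (y i - y j) =
      ∏ i ∈ (range k).erase r, ∏ j ∈ (Ioo i k).erase r, (x i - x j) :=
    prod_congr rfl fun i hi => prod_congr rfl fun j hj => by
      rw [hy i (ne_of_mem_erase hi), hy j (ne_of_mem_erase hj)]
  have right : ∏ j ∈ Ioo r k, (y r - y j) =
      (∏ j ∈ Ioo r k, (x r - x j)) * ∏ j ∈ Ioo r k, (x r - x j - 1) / (x r - x j) := by
    rw [← prod_mul_distrib]
    refine prod_congr rfl fun j hj => ?_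
    obtain ⟨hrj, hjk⟩ := mem_Ioo.1 hj
    rw [hyr, hy j hrj.ne', mul_div_cancel₀ _ (hne j hjk hrj.ne')]
    ring
  have left : ∏ i ∈ range r, (y i - y r) =
      (∏ i ∈ range r, (x i - x r)) * ∏ i ∈ range r, (x r - x i - 1) / (x r - x i) := by
    rw [← prod_mul_distrib]
    refine prod_congr rfl fun i hi => ?_
    have hir := mem_range.1 hi
    have := hne i (hir.trans hr) hir.ne
    rw [hyr, hy i hir.ne]
    field_simp
    ring
  unfold pairDiffProd
  rw [prod_range_prod_Ioo_eq_mul _ hr, prod_range_prod_Ioo_eq_mul _ hr,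
    prod_range_erase_eq_mul (fun j => (x r - x j - 1) / (x r - x j)) hr, rest, right, left]
  ring

end PairDiffProd

section ShiftIdentity

variable {K : Type*} [Field K]

noncomputable def shiftDefect (x : ℕ → K) (k : ℕ) : K[X] :=
  X * nodal (range k) (fun i => x i + 1) - (X - C (k : K)) * nodal (range k) x

theorem shiftDefect_succ (x : ℕ → K) (k : ℕ) :
    shiftDefect x (k + 1) = X * shiftDefect x k - C (x k + 1) * shiftDefect x k +
      C ((k : K) - x k) * nodal (range k) x := by
  simp only [shiftDefect, nodal_eq, prod_range_succ, map_add, map_sub, map_natCast, map_one,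
    Nat.cast_succ]
  ring

theorem coeff_shiftDefect (x : ℕ → K) (k : ℕ) :
    (∀ m, k ≤ m → (shiftDefect x k).coeff m = 0) ∧
      (X * shiftDefect x k).coeff k = ∑ i ∈ range k, ((i : K) - x i) := by
  induction k with
  | zero => simp [shiftDefect]
  | succ k ih =>
    have hdeg : (nodal (range k) x).natDegree = k := by rw [natDegree_nodal, card_range]
    have hlead : (nodal (range k) x).coeff k = 1 := by
      simpa only [hdeg] using (nodal_monic (s := range k) (v := x)).coeff_natDegree
    refine ⟨fun m hm => ?_, ?_⟩
    · obtain ⟨m, rfl⟩ : ∃ i, m = i + 1 := ⟨m - 1, by omega⟩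
      rw [shiftDefect_succ, coeff_add, coeff_sub, coeff_X_mul, coeff_C_mul, coeff_C_mul,
        ih.1 m (by omega), ih.1 (m + 1) (by omega),
        coeff_eq_zero_of_natDegree_lt (by omega : (nodal (range k) x).natDegree < m + 1)]
      ring
    · rw [coeff_X_mul, shiftDefect_succ, coeff_add, coeff_sub, coeff_C_mul, coeff_C_mul,
        ih.2, ih.1 k le_rfl, hlead, sum_range_succ]
      ring

theorem eval_shiftDefect {x : ℕ → K} {k a : ℕ} (ha : a ∈ range k) :
    (shiftDefect x k).eval (x a) = -(x a * ∏ j ∈ (range k).erase a, (x a - x j - 1)) := by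
  rw [shiftDefect, eval_sub, eval_mul, eval_mul, eval_nodal_at_node ha, eval_nodal,
    ← mul_prod_erase _ _ ha]
  simp only [eval_X, sub_add_eq_sub_sub, mul_zero, sub_zero]
  ring

theorem sum_mul_prod_sub_sub_one_div_sub (k : ℕ) (x : ℕ → K) (hx : Set.InjOn x (range k)) :
    ∑ a ∈ range k, x a * ∏ j ∈ (range k).erase a, (x a - x j - 1) / (x a - x j) =
      ∑ i ∈ range k, (x i - i) := by
  rcases k.eq_zero_or_pos with rfl | hk
  · simp
  have hdeg : (shiftDefect x k).degree < #(range k) :=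
    (degree_lt_iff_coeff_zero _ _).2 fun m hm => (coeff_shiftDefect x k).1 m (by simpa using hm)
  have hcoeff := coeff_eq_sum hx hdeg
  rw [card_range, show (shiftDefect x k).coeff (k - 1) = (X * shiftDefect x k).coeff k by
    rw [← coeff_X_mul, Nat.sub_add_cancel hk], (coeff_shiftDefect x k).2] at hcoeff
  rw [← neg_inj, ← sum_neg_distrib, ← sum_neg_distrib, sum_congr rfl fun i _ => neg_sub _ _,
    hcoeff]
  refine sum_congr rfl fun a ha => ?_
  rw [eval_shiftDefect ha, prod_div_distrib]
  ring

end ShiftIdentity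

def StandardFilling (s : Finset (ℕ × ℕ)) (n : ℕ) : Type :=
  {f : s → Fin n // Function.Bijective f ∧
    (∀ c d : s, (c : ℕ × ℕ).1 = (d : ℕ × ℕ).1 → (c : ℕ × ℕ).2 < (d : ℕ × ℕ).2 → f c < f d) ∧
    (∀ c d : s, (c : ℕ × ℕ).2 = (d : ℕ × ℕ).2 → (c : ℕ × ℕ).1 < (d : ℕ × ℕ).1 → f c < f d)}

def IsCornerCell (s : Finset (ℕ × ℕ)) (c : ℕ × ℕ) : Prop :=
  c ∈ s ∧ ∀ d ∈ s, (d.1 = c.1 → d.2 ≤ c.2) ∧ (d.2 = c.2 → d.1 ≤ c.1)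

instance (s : Finset (ℕ × ℕ)) : DecidablePred (IsCornerCell s) := fun _ => by
  unfold IsCornerCell; infer_instance

namespace StandardFilling

variable {s : Finset (ℕ × ℕ)} {n : ℕ}

instance : Finite (StandardFilling s n) := by unfold StandardFilling; infer_instance

theorem card_empty : Nat.card (StandardFilling ∅ 0) = 1 := by
  have : IsEmpty (∅ : Finset (ℕ × ℕ)) := ⟨fun c => notMem_empty _ c.2⟩
  refine Nat.card_eq_one_iff_unique.2 ⟨⟨fun F G => Subtype.ext (funext isEmptyElim)⟩, ⟨?_⟩⟩
  exact ⟨isEmptyElim, ⟨isEmptyElim, isEmptyElim⟩, isEmptyElim, isEmptyElim⟩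

noncomputable def lastCell (F : StandardFilling s (n + 1)) : s :=
  (Equiv.ofBijective F.1 F.2.1).symm (Fin.last n)

theorem lastCell_eq_iff {F : StandardFilling s (n + 1)} {x : s} :
    F.lastCell = x ↔ F.1 x = Fin.last n := by
  rw [lastCell, Equiv.symm_apply_eq, Equiv.ofBijective_apply, eq_comm]

theorem isCornerCell_lastCell (F : StandardFilling s (n + 1)) : IsCornerCell s F.lastCell := by
  have hlast := lastCell_eq_iff.1 (rfl : F.lastCell = F.lastCell)
  refine ⟨F.lastCell.2, fun d hd => ⟨fun hrow => ?_, fun hcol => ?_⟩⟩ <;>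
    refine not_lt.1 fun hlt => (Fin.le_last (F.1 ⟨d, hd⟩)).not_gt ?_
  · exact hlast ▸ F.2.2.1 _ ⟨d, hd⟩ hrow.symm hlt
  · exact hlast ▸ F.2.2.2 _ ⟨d, hd⟩ hcol.symm hlt

variable {c : ℕ × ℕ}

theorem apply_ne_last {F : StandardFilling s (n + 1)} {hc : c ∈ s}
    (hF : F.1 ⟨c, hc⟩ = Fin.last n) (x : s) (hx : x.1 ≠ c) : F.1 x ≠ Fin.last n := fun h =>
  hx (congrArg Subtype.val (F.2.1.1 (h.trans hF.symm)))

noncomputable def restrict (F : StandardFilling s (n + 1)) (hc : c ∈ s)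
    (hF : F.1 ⟨c, hc⟩ = Fin.last n) : StandardFilling (s.erase c) n :=
  ⟨fun x => (F.1 ⟨x, mem_of_mem_erase x.2⟩).castPred (apply_ne_last hF _ (ne_of_mem_erase x.2)),
    ⟨fun x y h => Subtype.ext (by simpa using F.2.1.1 (Fin.castPred_inj.1 h)),
      fun y => by
        obtain ⟨x, hx⟩ := F.2.1.2 y.castSucc
        have hxc : x.1 ≠ c := fun h => Fin.castSucc_ne_last y (by
          rw [← hx, ← hF, show x = ⟨c, hc⟩ from Subtype.ext h])
        exact ⟨⟨x, mem_erase.2 ⟨hxc, x.2⟩⟩, by simp [hx]⟩⟩,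
    fun x y h₁ h₂ => Fin.castPred_lt_castPred_iff.2 (F.2.2.1 _ _ h₁ h₂),
    fun x y h₁ h₂ => Fin.castPred_lt_castPred_iff.2 (F.2.2.2 _ _ h₁ h₂)⟩

noncomputable def extend (G : StandardFilling (s.erase c) n) (hc : IsCornerCell s c) :
    StandardFilling s (n + 1) :=
  ⟨fun x => if h : x.1 = c then Fin.last n else (G.1 ⟨x, mem_erase.2 ⟨h, x.2⟩⟩).castSucc, by
    refine ⟨⟨fun x y hxy => ?_, fun y => ?_⟩, fun x y h₁ h₂ => ?_, fun x y h₁ h₂ => ?_⟩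
    · by_cases hx : x.1 = c <;> by_cases hy : y.1 = c <;>
        simp only [hx, hy, dif_pos, dif_neg, not_false_eq_true] at hxy
      · exact Subtype.ext (hx.trans hy.symm)
      · exact absurd hxy.symm (Fin.castSucc_ne_last _)
      · exact absurd hxy (Fin.castSucc_ne_last _)
      · simpa using G.2.1.1 (Fin.castSucc_inj.1 hxy)
    · induction y using Fin.lastCases with
      | last => exact ⟨⟨c, hc.1⟩, dif_pos rfl⟩
      | cast i =>
        obtain ⟨x, hx⟩ := G.2.1.2 i
        exact ⟨⟨x, mem_of_mem_erase x.2⟩, by simp [ne_of_mem_erase x.2, hx]⟩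
    · have hxc : x.1 ≠ c := fun h => h₂.not_ge (h ▸ (hc.2 y y.2).1 (h ▸ h₁.symm))
      by_cases hy : y.1 = c <;> simp only [hxc, hy, dif_pos, dif_neg, not_false_eq_true]
      · exact Fin.castSucc_lt_last _
      · exact Fin.castSucc_lt_castSucc_iff.2 (G.2.2.1 _ _ h₁ h₂)
    · have hxc : x.1 ≠ c := fun h => h₂.not_ge (h ▸ (hc.2 y y.2).2 (h ▸ h₁.symm))
      by_cases hy : y.1 = c <;> simp only [hxc, hy, dif_pos, dif_neg, not_false_eq_true]
      · exact Fin.castSucc_lt_last _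
      · exact Fin.castSucc_lt_castSucc_iff.2 (G.2.2.2 _ _ h₁ h₂)⟩

noncomputable def fiberLastCellEquiv (hc : IsCornerCell s c) :
    {F : StandardFilling s (n + 1) // F.lastCell = ⟨c, hc.1⟩} ≃ StandardFilling (s.erase c) n where
  toFun F := restrict F.1 hc.1 (lastCell_eq_iff.1 F.2)
  invFun G := ⟨extend G hc, lastCell_eq_iff.2 (dif_pos rfl)⟩
  left_inv F := by
    refine Subtype.ext (Subtype.ext (funext fun x => ?_))
    by_cases hx : x.1 = c
    · simp only [extend, hx, dif_pos]
      rw [← lastCell_eq_iff.1 F.2, show x = ⟨c, hc.1⟩ from Subtype.ext hx]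
    · simp [extend, restrict, hx]
  right_inv G := Subtype.ext (funext fun x => by simp [restrict, extend, ne_of_mem_erase x.2])

theorem card_succ :
    Nat.card (StandardFilling s (n + 1)) =
      ∑ c ∈ s with IsCornerCell s c, Nat.card (StandardFilling (s.erase c) n) := by
  rw [Nat.card_congr (Equiv.sigmaFiberEquiv lastCell).symm, Nat.card_sigma, sum_filter,
    ← sum_coe_sort s]
  refine Fintype.sum_congr _ _ fun x => ?_
  split_ifs with hx
  · exact Nat.card_congr (fiberLastCellEquiv hx)
  · have : IsEmpty {F : StandardFilling s (n + 1) // F.lastCell = x} :=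
      ⟨fun F => hx (F.2 ▸ isCornerCell_lastCell F.1)⟩
    exact Nat.card_of_isEmpty

end StandardFilling

namespace YoungDiagram

variable (μ : YoungDiagram)

theorem lt_rowLen_iff_lt_colLen {i j : ℕ} : j < μ.rowLen i ↔ i < μ.colLen j := by
  rw [← mem_iff_lt_rowLen, mem_iff_lt_colLen]

theorem colLen_le_colLen_zero (j : ℕ) : μ.colLen j ≤ μ.colLen 0 :=
  μ.colLen_anti 0 j j.zero_le

theorem rowLen_eq_of_forall_mem_iff {i n : ℕ} (h : ∀ j, (i, j) ∈ μ ↔ j < n) : μ.rowLen i = n := by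
  have h₁ := h (μ.rowLen i)
  have h₂ := h n
  rw [mem_iff_lt_rowLen] at h₁ h₂
  omega

theorem colLen_le_of_le {ν : YoungDiagram} (h : ν ≤ μ) (j : ℕ) : ν.colLen j ≤ μ.colLen j := by
  by_contra! hlt
  exact (lt_irrefl _) (mem_iff_lt_colLen.1 (h (mem_iff_lt_colLen.2 hlt)))

def beta (k i : ℕ) : ℕ := μ.rowLen i + (k - 1 - i)

variable {μ} {k : ℕ}

theorem beta_strictAntiOn : StrictAntiOn (μ.beta k) (Set.Iio k) := fun i _ j hj hij => by
  have := μ.rowLen_anti i j hij.le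
  simp only [Set.mem_Iio] at hj
  unfold beta
  omega

theorem strictMono_add_sub_colLen (hk : μ.colLen 0 ≤ k) :
    StrictMono fun j => k + j - μ.colLen j := fun j j' hjj' => by
  have := μ.colLen_anti j j' hjj'.le
  have := (μ.colLen_le_colLen_zero j).trans hk
  simp only
  omega

theorem disjoint_image_colLen_image_beta (hk : μ.colLen 0 ≤ k) (i : ℕ) :
    Disjoint ((range (μ.rowLen i)).image fun j => k + j - μ.colLen j)
      ((Ioo i k).image (μ.beta k)) := by
  simp only [disjoint_left, mem_image, mem_range, mem_Ioo, not_exists, not_and]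
  rintro _ ⟨j, hj, rfl⟩ m ⟨him, hmk⟩ h
  have hcol := μ.colLen_le_colLen_zero j
  have hrow := μ.rowLen_anti i m him.le
  have hmj := μ.lt_rowLen_iff_lt_colLen (i := m) (j := j)
  unfold beta at h
  omega

theorem image_colLen_union_image_beta (hk : μ.colLen 0 ≤ k) {i : ℕ} (hi : i < k) :
    (range (μ.rowLen i)).image (fun j => k + j - μ.colLen j) ∪ (Ioo i k).image (μ.beta k) =
      range (μ.beta k i) := by
  have hcol : ∀ j < μ.rowLen i, i < μ.colLen j ∧ μ.colLen j ≤ k := fun j hj =>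
    ⟨μ.lt_rowLen_iff_lt_colLen.1 hj, (μ.colLen_le_colLen_zero j).trans hk⟩
  refine eq_of_subset_of_card_le (union_subset ?_ ?_) ?_
  · simp only [subset_iff, mem_image, mem_range]
    rintro _ ⟨j, hj, rfl⟩
    have := hcol j hj
    unfold beta
    omega
  · simp only [subset_iff, mem_image, mem_Ioo, mem_range]
    rintro _ ⟨m, hm, rfl⟩
    exact beta_strictAntiOn (hm.1.trans hm.2) hm.2 hm.1
  · rw [card_union_of_disjoint (disjoint_image_colLen_image_beta hk i),
      card_image_of_injective _ (strictMono_add_sub_colLen hk).injective,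
      card_image_of_injOn (beta_strictAntiOn.injOn.mono fun m hm => (mem_Ioo.1 hm).2),
      card_range, card_range, Nat.card_Ioo, beta]
    omega

theorem prod_hookLength_mul_prod_beta_sub (hk : μ.colLen 0 ≤ k) {i : ℕ} (hi : i < k) :
    (∏ j ∈ range (μ.rowLen i), hookLength μ (i, j)) * ∏ m ∈ Ioo i k, (μ.beta k i - μ.beta k m) =
      (μ.beta k i)! := by
  have hhook : ∀ j ∈ range (μ.rowLen i),
      hookLength μ (i, j) = μ.beta k i - (k + j - μ.colLen j) := fun j hj => by
    have := μ.lt_rowLen_iff_lt_colLen.1 (mem_range.1 hj)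
    have := (μ.colLen_le_colLen_zero j).trans hk
    simp only [hookLength, beta, mem_range] at hj ⊢
    omega
  rw [prod_congr rfl hhook, ← prod_image (f := fun s => μ.beta k i - s)
      fun j _ j' _ h => (strictMono_add_sub_colLen hk).injective h,
    ← prod_image (f := fun s => μ.beta k i - s)
      (beta_strictAntiOn.injOn.mono fun m hm => (mem_Ioo.1 hm).2),
    ← prod_union (disjoint_image_colLen_image_beta hk i), image_colLen_union_image_beta hk hi,
    ← Nat.descFactorial_eq_prod_range, Nat.descFactorial_self]

theorem mem_cells_iff_of_colLen_le (hk : μ.colLen 0 ≤ k) (c : ℕ × ℕ) :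
    c ∈ μ.cells ↔ c.1 ∈ range k ∧ c.2 ∈ range (μ.rowLen c.1) := by
  obtain ⟨i, j⟩ := c
  have := μ.lt_rowLen_iff_lt_colLen (i := i) (j := j)
  have := μ.colLen_le_colLen_zero j
  rw [mem_cells, mem_iff_lt_rowLen, mem_range, mem_range]
  dsimp only
  omega

theorem card_cells_eq_sum_rowLen (hk : μ.colLen 0 ≤ k) :
    #μ.cells = ∑ i ∈ range k, μ.rowLen i := by
  rw [card_eq_sum_ones, sum_finset_product _ _ (fun i => range (μ.rowLen i))
    (mem_cells_iff_of_colLen_le hk)]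
  simp

theorem injOn_cast_beta : Set.InjOn (fun i => (μ.beta k i : ℚ)) (range k) := by
  rw [coe_range]
  exact Nat.cast_injective.comp_injOn beta_strictAntiOn.injOn

theorem hookProd_mul_pairDiffProd (hk : μ.colLen 0 ≤ k) :
    (ydHookProd μ : ℚ) * pairDiffProd k (fun i => (μ.beta k i : ℚ)) =
      ∏ i ∈ range k, ((μ.beta k i)! : ℚ) := by
  have hdiff : ∀ i ∈ range k, ∏ m ∈ Ioo i k, ((μ.beta k i : ℚ) - μ.beta k m) =
      ((∏ m ∈ Ioo i k, (μ.beta k i - μ.beta k m) : ℕ) : ℚ) := fun i hi => by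
    rw [Nat.cast_prod]
    refine prod_congr rfl fun m hm => (Nat.cast_sub ?_).symm
    exact (beta_strictAntiOn (mem_range.1 hi) (mem_Ioo.1 hm).2 (mem_Ioo.1 hm).1).le
  rw [ydHookProd, prod_finset_product _ _ (fun i => range (μ.rowLen i))
    (mem_cells_iff_of_colLen_le hk), pairDiffProd, prod_congr rfl hdiff,
    Nat.cast_prod, ← prod_mul_distrib]
  refine prod_congr rfl fun i hi => ?_
  rw [← Nat.cast_mul, prod_hookLength_mul_prod_beta_sub hk (mem_range.1 hi)]

theorem ydHookProd_pos (μ : YoungDiagram) : 0 < ydHookProd μ :=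
  prod_pos fun ⟨i, j⟩ hc => by
    have := μ.lt_rowLen_iff_lt_colLen (i := i) (j := j)
    rw [mem_cells, mem_iff_lt_rowLen] at hc
    simp only [hookLength]
    omega

/-- Deleting every cell weakly below-right of `c` gives a Young diagram for any `c`; when `c` is a
corner, only `c` itself is deleted (`cells_eraseCorner`). -/
def eraseCorner (μ : YoungDiagram) (c : ℕ × ℕ) : YoungDiagram where
  cells := μ.cells.filter fun x => ¬c ≤ x
  isLowerSet a b hba hb := by
    simp only [coe_filter, mem_cells, Set.mem_ofPred_eq] at hb ⊢
    exact ⟨μ.isLowerSet hba hb.1, fun h => hb.2 (h.trans hba)⟩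

variable {c : ℕ × ℕ}

theorem mem_eraseCorner {x : ℕ × ℕ} : x ∈ μ.eraseCorner c ↔ x ∈ μ ∧ ¬c ≤ x := by
  rw [← mem_cells]
  simp [eraseCorner]

theorem eraseCorner_le : μ.eraseCorner c ≤ μ := fun _ h => (mem_eraseCorner.1 h).1

theorem isCornerCell_iff :
    IsCornerCell μ.cells c ↔ c.2 + 1 = μ.rowLen c.1 ∧ μ.rowLen (c.1 + 1) ≤ c.2 := by
  obtain ⟨i, j⟩ := c
  simp only [IsCornerCell, mem_cells, mem_iff_lt_rowLen, Prod.forall]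
  constructor
  · rintro ⟨hj, hmax⟩
    have right := not_lt.1 fun h => absurd ((hmax i (j + 1) h).1 rfl) (by omega)
    have below := not_lt.1 fun h => absurd ((hmax (i + 1) j h).2 rfl) (by omega)
    exact ⟨by omega, below⟩
  · rintro ⟨hrow, hbelow⟩
    refine ⟨by omega, fun a b hb => ⟨fun ha => by subst ha; omega, fun hb' => ?_⟩⟩
    subst hb'
    by_contra! hia
    have := μ.rowLen_anti (i + 1) a hia
    omega

theorem cells_eraseCorner (hc : IsCornerCell μ.cells c) :
    (μ.eraseCorner c).cells = μ.cells.erase c := by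
  ext x
  rw [mem_cells, mem_eraseCorner, mem_erase, mem_cells, and_comm (a := x ≠ c)]
  refine and_congr_right fun hx => not_congr ⟨fun hcx => ?_, fun hxc => hxc ▸ le_rfl⟩
  have hrow := (hc.2 (c.1, x.2) (μ.isLowerSet (Prod.mk_le_mk.2 ⟨hcx.1, le_rfl⟩) hx)).1 rfl
  have hcol := (hc.2 x ((mem_cells x).2 hx)).2 (le_antisymm hrow hcx.2)
  exact Prod.ext (le_antisymm hcol hcx.1) (le_antisymm hrow hcx.2)

theorem rowLen_eraseCorner (hc : IsCornerCell μ.cells c) :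
    (μ.eraseCorner c).rowLen = Function.update μ.rowLen c.1 c.2 := by
  obtain ⟨hrow, hbelow⟩ := μ.isCornerCell_iff.1 hc
  funext a
  refine rowLen_eq_of_forall_mem_iff _ fun j => ?_
  rw [mem_eraseCorner, mem_iff_lt_rowLen, Prod.mk_le_mk]
  rcases lt_trichotomy a c.1 with ha | rfl | ha
  · rw [Function.update_of_ne ha.ne]
    omega
  · rw [Function.update_self]
    omega
  · have := μ.rowLen_anti (c.1 + 1) a ha
    rw [Function.update_of_ne ha.ne']
    omega

theorem cast_beta_eraseCorner (hc : IsCornerCell μ.cells c) :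
    (fun i => ((μ.eraseCorner c).beta k i : ℚ)) =
      Function.update (fun i => (μ.beta k i : ℚ)) c.1 (μ.beta k c.1 - 1) := by
  have hrow := (μ.isCornerCell_iff.1 hc).1
  funext a
  simp only [beta, rowLen_eraseCorner hc]
  by_cases ha : a = c.1
  · subst ha
    rw [Function.update_self, Function.update_self]
    push_cast [show μ.rowLen c.1 = c.2 + 1 by omega]
    ring
  · rw [Function.update_of_ne ha, Function.update_of_ne ha]

theorem fst_lt_of_mem_of_colLen_le (hk : μ.colLen 0 ≤ k) (hc : c ∈ μ) : c.1 < k :=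
  (mem_range.1 ((μ.mem_cells_iff_of_colLen_le hk c).1 ((mem_cells c).2 hc)).1)

theorem hookProd_eq_hookProd_eraseCorner_mul (hk : μ.colLen 0 ≤ k) (hc : IsCornerCell μ.cells c) :
    (ydHookProd μ : ℚ) = ydHookProd (μ.eraseCorner c) *
      ((μ.beta k c.1 : ℚ) * ∏ j ∈ (range k).erase c.1,
        ((μ.beta k c.1 : ℚ) - μ.beta k j - 1) / ((μ.beta k c.1 : ℚ) - μ.beta k j)) := by
  have hr := fst_lt_of_mem_of_colLen_le hk ((mem_cells c).1 hc.1)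
  have hβr : μ.beta k c.1 ≠ 0 := by
    have := (μ.isCornerCell_iff.1 hc).1
    unfold beta
    omega
  have hμ := hookProd_mul_pairDiffProd hk
  have hν := hookProd_mul_pairDiffProd (μ := μ.eraseCorner c)
    ((colLen_le_of_le _ eraseCorner_le 0).trans hk)
  rw [cast_beta_eraseCorner hc, pairDiffProd_update_sub_one hr _ injOn_cast_beta] at hν
  have hfact : ∏ i ∈ range k, ((μ.beta k i)! : ℚ) =
      μ.beta k c.1 * ∏ i ∈ range k, (((μ.eraseCorner c).beta k i)! : ℚ) := by
    rw [← mul_prod_erase _ _ (mem_range.2 hr), ← mul_prod_erase _ _ (mem_range.2 hr),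
      ← Nat.mul_factorial_pred hβr]
    have hrest : ∀ i ∈ (range k).erase c.1, (μ.eraseCorner c).beta k i = μ.beta k i :=
      fun i hi => by simp [beta, rowLen_eraseCorner hc, ne_of_mem_erase hi]
    have hcorner : (μ.eraseCorner c).beta k c.1 = μ.beta k c.1 - 1 := by
      simp only [beta, rowLen_eraseCorner hc, Function.update_self]
      have := (μ.isCornerCell_iff.1 hc).1
      omega
    rw [prod_congr rfl fun i hi => by rw [← hrest i hi], hcorner]
    push_cast
    ring
  apply mul_right_cancel₀ (pairDiffProd_ne_zero (injOn_cast_beta (μ := μ)))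
  rw [hμ, hfact, ← hν]
  ring

theorem prod_beta_sub_beta_sub_one_div_eq_zero (hk : μ.colLen 0 ≤ k) {r : ℕ}
    (hr : r < μ.colLen 0) (hrow : μ.rowLen (r + 1) = μ.rowLen r) :
    ∏ j ∈ (range k).erase r, ((μ.beta k r : ℚ) - μ.beta k j - 1) / ((μ.beta k r : ℚ) - μ.beta k j)
      = 0 := by
  have hr1 : r + 1 < μ.colLen 0 :=
    μ.lt_rowLen_iff_lt_colLen.1 (hrow ▸ μ.lt_rowLen_iff_lt_colLen.2 hr)
  refine prod_eq_zero (i := r + 1) (mem_erase.2 ⟨by omega, mem_range.2 (by omega)⟩) ?_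
  have : μ.beta k r = μ.beta k (r + 1) + 1 := by
    unfold beta
    omega
  simp [this]

theorem sum_hookProd_div_hookProd_eraseCorner (μ : YoungDiagram) :
    ∑ c ∈ μ.cells with IsCornerCell μ.cells c, (ydHookProd μ : ℚ) / ydHookProd (μ.eraseCorner c) =
      #μ.cells := by
  set k := μ.colLen 0
  set x : ℕ → ℚ := fun i => μ.beta k i
  set w : ℕ → ℚ := fun r => x r * ∏ j ∈ (range k).erase r, (x r - x j - 1) / (x r - x j)
  have hk : μ.colLen 0 ≤ k := le_rfl
  have hfst : Set.InjOn Prod.fst (μ.cells.filter (IsCornerCell μ.cells) : Set (ℕ × ℕ)) :=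
    fun c hc c' hc' h => by
      have := (μ.isCornerCell_iff.1 (mem_filter.1 hc).2).1
      have := (μ.isCornerCell_iff.1 (mem_filter.1 hc').2).1
      exact Prod.ext h (by rw [h] at *; omega)
  have hvanish : ∀ r ∈ range k, r ∉ (μ.cells.filter (IsCornerCell μ.cells)).image Prod.fst →
      w r = 0 := fun r hr hnot => by
    have hpos : 0 < μ.rowLen r := μ.lt_rowLen_iff_lt_colLen.2 (mem_range.1 hr)
    refine mul_eq_zero_of_right _ (prod_beta_sub_beta_sub_one_div_eq_zero hk (mem_range.1 hr) ?_)
    refine le_antisymm (μ.rowLen_anti _ _ r.le_succ) (not_lt.1 fun hlt => hnot ?_)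
    have hc : IsCornerCell μ.cells (r, μ.rowLen r - 1) :=
      μ.isCornerCell_iff.2 ⟨by dsimp only; omega, by dsimp only; omega⟩
    exact mem_image.2 ⟨_, mem_filter.2 ⟨hc.1, hc⟩, rfl⟩
  calc ∑ c ∈ μ.cells with IsCornerCell μ.cells c, (ydHookProd μ : ℚ) / ydHookProd (μ.eraseCorner c)
      = ∑ c ∈ μ.cells with IsCornerCell μ.cells c, w c.1 := sum_congr rfl fun c hc => by
        rw [hookProd_eq_hookProd_eraseCorner_mul hk (mem_filter.1 hc).2,
          mul_div_cancel_left₀ _ (by exact_mod_cast (ydHookProd_pos _).ne')]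
    _ = ∑ r ∈ (μ.cells.filter (IsCornerCell μ.cells)).image Prod.fst, w r := (sum_image hfst).symm
    _ = ∑ r ∈ range k, w r := sum_subset (fun r hr => by
        obtain ⟨c, hc, rfl⟩ := mem_image.1 hr
        exact mem_range.2
          (fst_lt_of_mem_of_colLen_le hk ((mem_cells c).1 (mem_filter.1 hc).1))) hvanish
    _ = ∑ i ∈ range k, (x i - i) := sum_mul_prod_sub_sub_one_div_sub k x injOn_cast_beta
    _ = #μ.cells := by
        rw [card_cells_eq_sum_rowLen hk, sum_sub_distrib]
        simp only [x, beta, Nat.cast_add, sum_add_distrib, Nat.cast_sum]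
        rw [← sum_range_reflect (fun i => (i : ℚ)) k]
        ring

end YoungDiagram

theorem card_standardFilling_mul_ydHookProd (n : ℕ) (μ : YoungDiagram) (hn : #μ.cells = n) :
    Nat.card (StandardFilling μ.cells n) * ydHookProd μ = n ! := by
  induction n generalizing μ with
  | zero => rw [ydHookProd, card_eq_zero.1 hn, prod_empty, StandardFilling.card_empty,
    Nat.factorial_zero, mul_one]
  | succ n ih =>
    have hcorner : ∀ c, IsCornerCell μ.cells c →
        (Nat.card (StandardFilling (μ.cells.erase c) n) : ℚ) * ydHookProd (μ.eraseCorner c) = n ! :=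
      fun c hc => by
        have hν : #(μ.eraseCorner c).cells = n := by
          rw [YoungDiagram.cells_eraseCorner hc, card_erase_of_mem hc.1, hn, Nat.add_sub_cancel]
        rw [← YoungDiagram.cells_eraseCorner hc]
        exact_mod_cast ih _ hν
    suffices (Nat.card (StandardFilling μ.cells (n + 1)) : ℚ) * ydHookProd μ = (n + 1)! by
      exact_mod_cast this
    calc (Nat.card (StandardFilling μ.cells (n + 1)) : ℚ) * ydHookProd μ
        = ∑ c ∈ μ.cells with IsCornerCell μ.cells c,
            (n ! : ℚ) * (ydHookProd μ / ydHookProd (μ.eraseCorner c)) := by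
          rw [StandardFilling.card_succ, Nat.cast_sum, sum_mul]
          refine sum_congr rfl fun c hc => ?_
          rw [← hcorner c (mem_filter.1 hc).2]
          have := (YoungDiagram.ydHookProd_pos (μ.eraseCorner c)).ne'
          field_simp
      _ = (n + 1)! := by
          rw [← mul_sum, YoungDiagram.sum_hookProd_div_hookProd_eraseCorner, hn,
            Nat.factorial_succ]
          push_cast
          ring

/-- The Frame–Robinson–Thrall hook length formula: the number of standard Young
tableaux of shape `μ` (bijective fillings of the boxes of `μ` by `1, …, N` with
`N = |μ|`, strictly increasing along rows and columns) equals `N!/h_μ`, stated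
multiplicatively. -/
theorem hook_length_formula (μ : YoungDiagram) :
    Nat.card {f : μ.cells → Fin μ.cells.card //
        Function.Bijective f ∧
          (∀ c d : μ.cells, (c : ℕ × ℕ).1 = (d : ℕ × ℕ).1 →
            (c : ℕ × ℕ).2 < (d : ℕ × ℕ).2 → f c < f d) ∧
          (∀ c d : μ.cells, (c : ℕ × ℕ).2 = (d : ℕ × ℕ).2 →
            (c : ℕ × ℕ).1 < (d : ℕ × ℕ).1 → f c < f d)} *
      ydHookProd μ
    = Nat.factorial μ.cells.card :=
  card_standardFilling_mul_ydHookProd _ μ rfl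
end
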